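/- Let H be a Hopf algebra with invertible antipode S and B = A^{coH} ⊆ A a Hopf-Galois extension. Then the second Galois map χ̃: A ⊗_B A → A ⊗ H, a ⊗_B a' ↦ a_{(0)} a' ⊗ a_{(1)} is also bijective, with inverse given by a ⊗ h ↦ S^{-1}(h)^{⟨1⟩} ⊗_B S^{-1}(h)^{⟨2⟩} a, where τ(h) = h^{⟨1⟩} ⊗_B h^{⟨2⟩} denotes the translation map of the first Galois map χ(a ⊗_B a') = a a'_{(0)} ⊗ a'_{(1)}. -/

import Mathlib

/-!
Statement 1: the second Galois map `χ̃ : A ⊗_B A → A ⊗ H`, `a ⊗ a' ↦ a₍₀₎ a' ⊗ a₍₁₎`,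
of a Hopf-Galois extension `B = A^{co H} ⊆ A` over a Hopf algebra `H` with invertible
antipode `S` is also bijective, with inverse `a ⊗ h ↦ S⁻¹(h)⁽¹⁾ ⊗_B S⁻¹(h)⁽²⁾ a`.

Since Mathlib has no tensor products over the (possibly noncommutative) subring `B`,
the tensor product `A ⊗_B A` is realized concretely as the quotient of `A ⊗[k] A`
by the `B`-balancing relations, where `B` is the coinvariant subalgebra.
Sweedler-type expressions are handled through chosen finite presentations (lists of
simple tensors) of the relevant elements.
-/

open TensorProduct

set_option synthInstance.maxHeartbeats 400000
set_option maxHeartbeats 1000000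

noncomputable section

variable (k : Type) [Field k]
variable (H : Type) [Ring H] [HopfAlgebra k H]
variable (A : Type) [Ring A] [Algebra k A]

/-- Sum of a list of simple tensors in `A ⊗[k] A`. -/
def sumAA (l : List (A × A)) : A ⊗[k] A := (l.map fun p => p.1 ⊗ₜ[k] p.2).sum

/-- Sum of a list of simple tensors in `A ⊗[k] H`. -/
def sumAH (l : List (A × H)) : A ⊗[k] H := (l.map fun p => p.1 ⊗ₜ[k] p.2).sum

variable (ρ : A →ₐ[k] A ⊗[k] H)

/-- Coassociativity of the right `H`-coaction `ρ` on `A`. -/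
def IsCoassoc : Prop :=
  ∀ a : A, (LinearMap.rTensor H ρ.toLinearMap) (ρ a)
    = (TensorProduct.assoc k A H H).symm
        ((LinearMap.lTensor A (Coalgebra.comul (R := k))) (ρ a))

/-- Counitality of the right `H`-coaction `ρ` on `A`. -/
def IsCounital : Prop :=
  ∀ a : A, (TensorProduct.rid k A) ((LinearMap.lTensor A (Coalgebra.counit (R := k))) (ρ a)) = a

lemma coinv_mul {a b : A} (ha : ρ a = a ⊗ₜ[k] 1) (hb : ρ b = b ⊗ₜ[k] 1) :
    ρ (a * b) = (a * b) ⊗ₜ[k] 1 := by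
  rw [map_mul, ha, hb, Algebra.TensorProduct.tmul_mul_tmul, mul_one]

lemma coinv_one : ρ (1 : A) = (1 : A) ⊗ₜ[k] 1 := by
  simp only [map_one, Algebra.TensorProduct.one_def]

lemma coinv_add {a b : A} (ha : ρ a = a ⊗ₜ[k] 1) (hb : ρ b = b ⊗ₜ[k] 1) :
    ρ (a + b) = (a + b) ⊗ₜ[k] 1 := by
  rw [map_add, ha, hb, ← TensorProduct.add_tmul]

lemma coinv_algebraMap (c : k) : ρ (algebraMap k A c) = (algebraMap k A c) ⊗ₜ[k] 1 := by
  rw [AlgHom.commutes, Algebra.TensorProduct.algebraMap_apply]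

/-- The subalgebra `B = A^{co H}` of coinvariants. -/
def coinv : Subalgebra k A where
  carrier := {a | ρ a = a ⊗ₜ[k] 1}
  mul_mem' := fun ha hb => coinv_mul k H A ρ ha hb
  one_mem' := coinv_one k H A ρ
  add_mem' := fun ha hb => coinv_add k H A ρ ha hb
  algebraMap_mem' := fun c => coinv_algebraMap k H A ρ c

/-- The `B`-balancing relations defining `A ⊗_B A` as a quotient of `A ⊗[k] A`. -/
def hgRel : Submodule k (A ⊗[k] A) :=
  Submodule.span k
    {x | ∃ a a' b, b ∈ coinv k H A ρ ∧ x = (a * b) ⊗ₜ[k] a' - a ⊗ₜ[k] (b * a')}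

/-- `A ⊗_B A`. -/
abbrev HGT := (A ⊗[k] A) ⧸ hgRel k H A ρ

/-- Canonical projection `A ⊗[k] A → A ⊗_B A`. -/
def mkT : A ⊗[k] A →ₗ[k] HGT k H A ρ := (hgRel k H A ρ).mkQ

/-- The Galois map, before descending to `A ⊗_B A`:  `a ⊗ a' ↦ a a'₍₀₎ ⊗ a'₍₁₎`. -/
def chi0 : A ⊗[k] A →ₗ[k] A ⊗[k] H :=
  (LinearMap.rTensor H (LinearMap.mul' k A)) ∘ₗ
    ((TensorProduct.assoc k A A H).symm.toLinearMap) ∘ₗ (LinearMap.lTensor A ρ.toLinearMap)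

lemma chi0_tmul (x y : A) :
    chi0 k H A ρ (x ⊗ₜ[k] y) = (LinearMap.rTensor H (LinearMap.mulLeft k x)) (ρ y) := by
  have aux : ∀ z : A ⊗[k] H,
      (LinearMap.rTensor H (LinearMap.mul' k A))
        ((TensorProduct.assoc k A A H).symm (x ⊗ₜ[k] z))
        = (LinearMap.rTensor H (LinearMap.mulLeft k x)) z := by
    intro z
    induction z using TensorProduct.induction_on with
    | zero => rw [TensorProduct.tmul_zero]; simp only [map_zero]
    | tmul c h =>
        simp only [TensorProduct.assoc_symm_tmul, LinearMap.rTensor_tmul,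
          LinearMap.mul'_apply, LinearMap.mulLeft_apply]
    | add u v hu hv =>
        rw [TensorProduct.tmul_add, map_add, map_add, hu, hv, map_add]
  simp only [chi0, LinearMap.coe_comp, Function.comp_apply, LinearMap.lTensor_tmul,
    LinearEquiv.coe_coe]
  exact aux (ρ y)

lemma hgRel_le_ker : hgRel k H A ρ ≤ LinearMap.ker (chi0 k H A ρ) := by
  rw [hgRel, Submodule.span_le]
  rintro x ⟨a, a', b, hb, rfl⟩
  have hb' : ρ b = b ⊗ₜ[k] 1 := hb
  have aux : ∀ z : A ⊗[k] H,
      (LinearMap.rTensor H (LinearMap.mulLeft k a)) ((b ⊗ₜ[k] (1 : H)) * z)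
        = (LinearMap.rTensor H (LinearMap.mulLeft k (a * b))) z := by
    intro z
    induction z using TensorProduct.induction_on with
    | zero => simp
    | tmul c h => simp [Algebra.TensorProduct.tmul_mul_tmul, mul_assoc]
    | add u v hu hv => simp [mul_add, map_add, hu, hv]
  simp only [SetLike.mem_coe, LinearMap.mem_ker, map_sub, chi0_tmul]
  rw [map_mul, hb', aux (ρ a'), sub_self]

/-- The Galois map `χ : A ⊗_B A → A ⊗[k] H`. -/
def chiq : HGT k H A ρ →ₗ[k] A ⊗[k] H :=
  Submodule.liftQ (hgRel k H A ρ) (chi0 k H A ρ) (hgRel_le_ker k H A ρ)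


/-- The second Galois map before descending to `A ⊗_B A`:  `a ⊗ a' ↦ a₍₀₎ a' ⊗ a₍₁₎`. -/
def chit0 : A ⊗[k] A →ₗ[k] A ⊗[k] H :=
  (LinearMap.rTensor H (LinearMap.mul' k A)) ∘ₗ
    ((TensorProduct.assoc k A A H).symm.toLinearMap) ∘ₗ
      (LinearMap.lTensor A (TensorProduct.comm k H A).toLinearMap) ∘ₗ
        ((TensorProduct.assoc k A H A).toLinearMap) ∘ₗ
          (LinearMap.rTensor A ρ.toLinearMap)

lemma chit0_tmul (x y : A) :
    chit0 k H A ρ (x ⊗ₜ[k] y) = (LinearMap.rTensor H (LinearMap.mulRight k y)) (ρ x) := by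
  have aux : ∀ z : A ⊗[k] H,
      (LinearMap.rTensor H (LinearMap.mul' k A))
        ((TensorProduct.assoc k A A H).symm
          ((LinearMap.lTensor A (TensorProduct.comm k H A).toLinearMap)
            ((TensorProduct.assoc k A H A) (z ⊗ₜ[k] y))))
        = (LinearMap.rTensor H (LinearMap.mulRight k y)) z := by
    intro z
    induction z using TensorProduct.induction_on with
    | zero => rw [TensorProduct.zero_tmul]; simp only [map_zero]
    | tmul c h =>
        simp only [TensorProduct.assoc_tmul, LinearMap.lTensor_tmul, LinearEquiv.coe_coe,
          TensorProduct.comm_tmul, TensorProduct.assoc_symm_tmul, LinearMap.rTensor_tmul,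
          LinearMap.mul'_apply, LinearMap.mulRight_apply]
    | add u v hu hv =>
        rw [TensorProduct.add_tmul]
        simp only [map_add]
        rw [hu, hv]
  simp only [chit0, LinearMap.coe_comp, Function.comp_apply, LinearMap.rTensor_tmul,
    LinearEquiv.coe_coe]
  exact aux (ρ x)

lemma hgRel_le_ker' : hgRel k H A ρ ≤ LinearMap.ker (chit0 k H A ρ) := by
  rw [hgRel, Submodule.span_le]
  rintro x ⟨a, a', b, hb, rfl⟩
  have hb' : ρ b = b ⊗ₜ[k] 1 := hb
  have aux : ∀ z : A ⊗[k] H,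
      (LinearMap.rTensor H (LinearMap.mulRight k a')) (z * (b ⊗ₜ[k] (1 : H)))
        = (LinearMap.rTensor H (LinearMap.mulRight k (b * a'))) z := by
    intro z
    induction z using TensorProduct.induction_on with
    | zero => simp
    | tmul c h => simp [Algebra.TensorProduct.tmul_mul_tmul, mul_assoc]
    | add u v hu hv => simp [add_mul, map_add, hu, hv]
  simp only [SetLike.mem_coe, LinearMap.mem_ker, map_sub, chit0_tmul]
  rw [map_mul, hb', aux (ρ a), sub_self]

/-- The second Galois map `χ̃ : A ⊗_B A → A ⊗[k] H`. -/
def chitq : HGT k H A ρ →ₗ[k] A ⊗[k] H :=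
  Submodule.liftQ (hgRel k H A ρ) (chit0 k H A ρ) (hgRel_le_ker' k H A ρ)

/-- Right multiplication by `a ∈ A` on the second tensor leg of `A ⊗_B A`. -/
def rmulT (a : A) : HGT k H A ρ →ₗ[k] HGT k H A ρ :=
  Submodule.liftQ (hgRel k H A ρ)
    ((mkT k H A ρ) ∘ₗ (LinearMap.lTensor A (LinearMap.mulRight k a)))
    (by
      refine Submodule.span_le.mpr ?_
      rintro x ⟨c, c', b, hb, rfl⟩
      simp only [SetLike.mem_coe, LinearMap.mem_ker, map_sub, LinearMap.coe_comp,
        Function.comp_apply, LinearMap.lTensor_tmul, LinearMap.mulRight_apply]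
      rw [← map_sub, mkT]
      rw [Submodule.mkQ_apply, Submodule.Quotient.mk_eq_zero]
      exact Submodule.subset_span ⟨c, c' * a, b, hb, by rw [mul_assoc]⟩)

/-!
The second Galois map factors as `χ̃ = Φ ∘ (id ⊗ S) ∘ χ` with `Φ(a ⊗ h) = a₍₀₎ ⊗ a₍₁₎ h`, since
`Φ((id ⊗ S)((x ⊗ 1) ρ(y))) = ρ(x) (y₍₀₎ ⊗ y₍₁₎ S(y₍₂₎)) = ρ(x) (y ⊗ 1) = χ̃(x ⊗ y)`.
By coassociativity, counitality and the antipode axioms, `Φ` is invertible with inverse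
`a ⊗ h ↦ a₍₀₎ ⊗ S(a₍₁₎) h`, so `χ̃` is bijective together with `χ` and `S`. For the inverse,
`χ̃(τ g) = Φ(1 ⊗ S g) = 1 ⊗ S g` and `χ̃(x a) = χ̃(x) (a ⊗ 1)`, whence
`χ̃(τ(S⁻¹ h) a) = (1 ⊗ h)(a ⊗ 1) = a ⊗ h`.
-/

open LinearMap (lTensor rTensor mulLeft mulRight)
open HopfAlgebra (antipode)

section

variable {k H A}

/-- `a ⊗ h ↦ a₍₀₎ ⊗ f(a₍₁₎) h`. -/
def coactMul (f : H →ₗ[k] H) : A ⊗[k] H →ₗ[k] A ⊗[k] H :=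
  LinearMap.mul' k (A ⊗[k] H) ∘ₗ
    TensorProduct.map (lTensor A f ∘ₗ ρ.toLinearMap)
      (Algebra.TensorProduct.includeRight (R := k) (A := A)).toLinearMap

variable {ρ}

lemma coactMul_tmul (f : H →ₗ[k] H) (a : A) (h : H) :
    coactMul ρ f (a ⊗ₜ h) = lTensor A f (ρ a) * (1 ⊗ₜ h) := rfl

lemma coactMul_tmul_one (f : H →ₗ[k] H) (a : A) :
    coactMul ρ f (a ⊗ₜ 1) = lTensor A f (ρ a) := by
  rw [coactMul_tmul, ← Algebra.TensorProduct.one_def, mul_one]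

lemma coactMul_mul_one_tmul (f : H →ₗ[k] H) (z : A ⊗[k] H) (h : H) :
    coactMul ρ f (z * (1 ⊗ₜ h)) = coactMul ρ f z * (1 ⊗ₜ h) := by
  induction z using TensorProduct.induction_on with
  | zero => simp
  | tmul a g => simp [coactMul_tmul, Algebra.TensorProduct.tmul_mul_tmul, mul_assoc]
  | add u v hu hv => simp only [add_mul, map_add, hu, hv]

lemma coactMul_id_tmul_one_mul (x : A) (z : A ⊗[k] H) :
    coactMul ρ LinearMap.id ((x ⊗ₜ 1) * z) = ρ x * coactMul ρ LinearMap.id z := by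
  induction z using TensorProduct.induction_on with
  | zero => simp
  | tmul a h => simp [coactMul_tmul, Algebra.TensorProduct.tmul_mul_tmul, mul_assoc]
  | add u v hu hv => simp only [mul_add, map_add, hu, hv]

lemma coactMul_eq_lTensor_assoc_rTensor (f : H →ₗ[k] H) (z : A ⊗[k] H) :
    coactMul ρ f z = lTensor A (LinearMap.mul' k H ∘ₗ rTensor H f)
      (TensorProduct.assoc k A H H (rTensor H ρ.toLinearMap z)) := by
  induction z using TensorProduct.induction_on with
  | zero => simp
  | tmul a h =>
    rw [coactMul_tmul, LinearMap.rTensor_tmul, AlgHom.toLinearMap_apply]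
    generalize ρ a = w
    induction w using TensorProduct.induction_on with
    | zero => simp
    | tmul c g => simp [Algebra.TensorProduct.tmul_mul_tmul]
    | add u v hu hv => simp only [map_add, add_mul, TensorProduct.add_tmul, hu, hv]
  | add u v hu hv => simp only [map_add, hu, hv]

lemma lTensor_algebraLinearMap_apply (x : A ⊗[k] k) :
    lTensor A (Algebra.linearMap k H) x = TensorProduct.rid k A x ⊗ₜ 1 := by
  induction x using TensorProduct.induction_on with
  | zero => simp
  | tmul a c => simp [Algebra.algebraMap_eq_smul_one, TensorProduct.smul_tmul']
  | add u v hu hv => simp only [map_add, TensorProduct.add_tmul, hu, hv]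

/-- `a₍₀₎ ⊗ r(a₍₁₎ ⊗ a₍₂₎) = a ⊗ 1` whenever `r` contracts the comultiplication to the counit. -/
lemma lTensor_assoc_rTensor_coaction (hcoassoc : IsCoassoc k H A ρ)
    (hcounit : IsCounital k H A ρ) {r : H ⊗[k] H →ₗ[k] H}
    (hr : r ∘ₗ Coalgebra.comul = Algebra.linearMap k H ∘ₗ Coalgebra.counit) (a : A) :
    lTensor A r (TensorProduct.assoc k A H H (rTensor H ρ.toLinearMap (ρ a))) = a ⊗ₜ 1 := by
  rw [hcoassoc a, LinearEquiv.apply_symm_apply, ← LinearMap.lTensor_comp_apply, hr,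
    LinearMap.lTensor_comp_apply, lTensor_algebraLinearMap_apply, hcounit]

lemma coactMul_antipode_coaction (hcoassoc : IsCoassoc k H A ρ)
    (hcounit : IsCounital k H A ρ) (a : A) :
    coactMul ρ (antipode k) (ρ a) = a ⊗ₜ 1 := by
  rw [coactMul_eq_lTensor_assoc_rTensor]
  exact lTensor_assoc_rTensor_coaction hcoassoc hcounit
    (by rw [LinearMap.comp_assoc]; exact HopfAlgebra.mul_antipode_rTensor_comul) a

lemma coactMul_id_lTensor_antipode_coaction (hcoassoc : IsCoassoc k H A ρ)
    (hcounit : IsCounital k H A ρ) (a : A) :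
    coactMul ρ LinearMap.id (lTensor A (antipode k) (ρ a)) = a ⊗ₜ 1 := by
  have hnat : (TensorProduct.assoc k A H H).toLinearMap ∘ₗ rTensor H ρ.toLinearMap ∘ₗ
        lTensor A (antipode k)
      = lTensor A (lTensor H (antipode k)) ∘ₗ (TensorProduct.assoc k A H H).toLinearMap ∘ₗ
        rTensor H ρ.toLinearMap := by
    rw [LinearMap.rTensor_comp_lTensor, ← LinearMap.lTensor_comp_rTensor, LinearMap.lTensor_tensor]
    ext
    simp
  calc coactMul ρ LinearMap.id (lTensor A (antipode k) (ρ a))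
      = lTensor A (LinearMap.mul' k H) (((TensorProduct.assoc k A H H).toLinearMap ∘ₗ
          rTensor H ρ.toLinearMap ∘ₗ lTensor A (antipode k)) (ρ a)) := by
        rw [coactMul_eq_lTensor_assoc_rTensor, LinearMap.rTensor_id, LinearMap.comp_id]; rfl
    _ = lTensor A (LinearMap.mul' k H ∘ₗ lTensor H (antipode k))
          (TensorProduct.assoc k A H H (rTensor H ρ.toLinearMap (ρ a))) := by
        rw [hnat, LinearMap.lTensor_comp_apply]; rfl
    _ = a ⊗ₜ 1 := lTensor_assoc_rTensor_coaction hcoassoc hcounit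
        (by rw [LinearMap.comp_assoc]; exact HopfAlgebra.mul_antipode_lTensor_comul) a

lemma tmul_eq_tmul_one_mul_one_tmul (a : A) (h : H) :
    a ⊗ₜ[k] h = (a ⊗ₜ 1) * (1 ⊗ₜ h) := by
  rw [Algebra.TensorProduct.tmul_mul_tmul, mul_one, one_mul]

lemma coactMul_antipode_comp_coactMul_id (hcoassoc : IsCoassoc k H A ρ)
    (hcounit : IsCounital k H A ρ) :
    coactMul ρ (antipode k) ∘ₗ coactMul ρ LinearMap.id = LinearMap.id := by
  refine TensorProduct.ext' fun a h => ?_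
  rw [LinearMap.comp_apply, tmul_eq_tmul_one_mul_one_tmul, coactMul_mul_one_tmul,
    coactMul_mul_one_tmul, coactMul_tmul_one, LinearMap.lTensor_id, LinearMap.id_apply,
    coactMul_antipode_coaction hcoassoc hcounit, LinearMap.id_apply]

lemma coactMul_id_comp_coactMul_antipode (hcoassoc : IsCoassoc k H A ρ)
    (hcounit : IsCounital k H A ρ) :
    coactMul ρ LinearMap.id ∘ₗ coactMul ρ (antipode k) = LinearMap.id := by
  refine TensorProduct.ext' fun a h => ?_
  rw [LinearMap.comp_apply, tmul_eq_tmul_one_mul_one_tmul, coactMul_mul_one_tmul,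
    coactMul_mul_one_tmul, coactMul_tmul_one,
    coactMul_id_lTensor_antipode_coaction hcoassoc hcounit, LinearMap.id_apply]

lemma coactMul_id_bijective (hcoassoc : IsCoassoc k H A ρ) (hcounit : IsCounital k H A ρ) :
    Function.Bijective (coactMul ρ LinearMap.id) :=
  Function.bijective_iff_has_inverse.mpr ⟨coactMul ρ (antipode k),
    LinearMap.congr_fun (coactMul_antipode_comp_coactMul_id hcoassoc hcounit),
    LinearMap.congr_fun (coactMul_id_comp_coactMul_antipode hcoassoc hcounit)⟩

lemma rTensor_mulLeft_eq_mul (x : A) (z : A ⊗[k] H) :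
    rTensor H (mulLeft k x) z = (x ⊗ₜ 1) * z := by
  rw [← LinearMap.mulLeft_apply (R := k), LinearMap.mulLeft_tmul, LinearMap.mulLeft_one]
  rfl

lemma rTensor_mulRight_eq_mul (y : A) (z : A ⊗[k] H) :
    rTensor H (mulRight k y) z = z * (y ⊗ₜ 1) := by
  rw [← LinearMap.mulRight_apply (R := k), LinearMap.mulRight_tmul, LinearMap.mulRight_one]
  rfl

lemma lTensor_tmul_one_mul (f : H →ₗ[k] H) (x : A) (z : A ⊗[k] H) :
    lTensor A f ((x ⊗ₜ 1) * z) = (x ⊗ₜ 1) * lTensor A f z := by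
  rw [← rTensor_mulLeft_eq_mul, ← rTensor_mulLeft_eq_mul, ← LinearMap.comp_apply,
    LinearMap.lTensor_comp_rTensor, ← LinearMap.rTensor_comp_lTensor, LinearMap.comp_apply]

lemma chi0_tmul_eq_mul (x y : A) : chi0 k H A ρ (x ⊗ₜ y) = (x ⊗ₜ 1) * ρ y := by
  rw [chi0_tmul, rTensor_mulLeft_eq_mul]

lemma chit0_tmul_eq_mul (x y : A) : chit0 k H A ρ (x ⊗ₜ y) = ρ x * (y ⊗ₜ 1) := by
  rw [chit0_tmul, rTensor_mulRight_eq_mul]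

lemma chit0_eq_comp_chi0 (hcoassoc : IsCoassoc k H A ρ) (hcounit : IsCounital k H A ρ) :
    chit0 k H A ρ = coactMul ρ LinearMap.id ∘ₗ lTensor A (antipode k) ∘ₗ chi0 k H A ρ := by
  refine TensorProduct.ext' fun x y => ?_
  rw [LinearMap.comp_apply, LinearMap.comp_apply, chi0_tmul_eq_mul, lTensor_tmul_one_mul,
    coactMul_id_tmul_one_mul, coactMul_id_lTensor_antipode_coaction hcoassoc hcounit,
    chit0_tmul_eq_mul]

lemma chitq_eq_comp_chiq (hcoassoc : IsCoassoc k H A ρ) (hcounit : IsCounital k H A ρ) :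
    chitq k H A ρ = coactMul ρ LinearMap.id ∘ₗ lTensor A (antipode k) ∘ₗ chiq k H A ρ := by
  refine Submodule.linearMap_qext _ ?_
  simp only [chitq, chiq, LinearMap.comp_assoc, Submodule.liftQ_mkQ]
  exact chit0_eq_comp_chi0 hcoassoc hcounit

lemma chitq_eq_one_tmul_antipode (hcoassoc : IsCoassoc k H A ρ) (hcounit : IsCounital k H A ρ)
    {x : HGT k H A ρ} {g : H} (hx : chiq k H A ρ x = 1 ⊗ₜ g) :
    chitq k H A ρ x = 1 ⊗ₜ antipode k g := by
  rw [chitq_eq_comp_chiq hcoassoc hcounit, LinearMap.comp_apply, LinearMap.comp_apply, hx,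
    LinearMap.lTensor_tmul, coactMul_tmul, map_one, LinearMap.lTensor_id, LinearMap.id_apply,
    one_mul]

lemma chitq_rmulT (a : A) (x : HGT k H A ρ) :
    chitq k H A ρ (rmulT k H A ρ a x) = chitq k H A ρ x * (a ⊗ₜ 1) := by
  induction x using Submodule.Quotient.induction_on with | _ w
  induction w using TensorProduct.induction_on with
  | zero => simp
  | tmul x y =>
    simp only [rmulT, chitq, mkT, Submodule.mkQ_apply, Submodule.liftQ_apply,
      LinearMap.comp_apply, LinearMap.lTensor_tmul, LinearMap.mulRight_apply, chit0_tmul_eq_mul,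
      mul_assoc, Algebra.TensorProduct.tmul_mul_tmul, mul_one]
  | add u v hu hv => simp only [Submodule.Quotient.mk_add, map_add, add_mul, hu, hv]

end

/-- For a Hopf-Galois extension `B = A^{co H} ⊆ A` over a Hopf algebra `H`
with invertible antipode, the second Galois map `χ̃ : A ⊗_B A → A ⊗ H`,
`a ⊗ a' ↦ a₍₀₎ a' ⊗ a₍₁₎`, is bijective, with inverse
`a ⊗ h ↦ S⁻¹(h)⁽¹⁾ ⊗_B S⁻¹(h)⁽²⁾ a = τ(S⁻¹ h)·a`. -/
theorem second_galois_map_bijective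
    (Sinv : H →ₗ[k] H)
    (hS1 : ∀ h : H, HopfAlgebra.antipode (R := k) (Sinv h) = h)
    (hS2 : ∀ h : H, Sinv (HopfAlgebra.antipode (R := k) h) = h)
    (hcoassoc : IsCoassoc k H A ρ) (hcounit : IsCounital k H A ρ)
    (hGal : Function.Bijective (chiq k H A ρ))
    (τ : H →ₗ[k] HGT k H A ρ)
    (hτ : ∀ h : H, chiq k H A ρ (τ h) = (1 : A) ⊗ₜ[k] h) :
    Function.Bijective (chitq k H A ρ)
      ∧ ∀ (a : A) (h : H), chitq k H A ρ (rmulT k H A ρ a (τ (Sinv h))) = a ⊗ₜ[k] h := by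
  have hS : Function.Bijective (lTensor A (antipode k) : A ⊗[k] H → A ⊗[k] H) :=
    (LinearEquiv.lTensor A (LinearEquiv.ofLinearMap (antipode k) Sinv
      (LinearMap.ext hS1) (LinearMap.ext hS2))).bijective
  refine ⟨?_, fun a h => ?_⟩
  · rw [chitq_eq_comp_chiq hcoassoc hcounit, LinearMap.coe_comp, LinearMap.coe_comp]
    exact (coactMul_id_bijective hcoassoc hcounit).comp (hS.comp hGal)
  · rw [chitq_rmulT, chitq_eq_one_tmul_antipode hcoassoc hcounit (hτ _), hS1,
      Algebra.TensorProduct.tmul_mul_tmul, one_mul, mul_one]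

end
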